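/- arXiv:2201.02395 — 3 statements merged into one kernel-verified Lean document; each statement's English description precedes it below -/
import Mathlib

section
/- Let (g_k) and (h_k) be nonnegative real sequences satisfying g_k ≤ a₁ g_{k−1} + b₁ h_{k−1} + d₁ and h_k ≤ a₂ g_{k−1} + b₂ h_{k−1} + d₂ for all k ≥ 1, with nonnegative coefficients, and suppose the 2×2 matrix C = [[a₁,b₁],[a₂,b₂]] has operator norm σ = ‖C‖ < 1. Then for every T ∈ ℕ, both partial sums G_T = Σ_{k=0}^T g_k and H_T = Σ_{k=0}^T h_k satisfy max{G_T, H_T} ≤ (σ^T + 1/(1−σ))(g₀ + h₀) + T(d₁ + d₂)/(1−σ). -/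
/-!
Put `v k = (g k, h k)` in Euclidean `ℝ²`. Since `0 ≤ v (k+1) ≤ C v k + d` coordinatewise and the
Euclidean norm is monotone on the nonnegative orthant, `‖v (k+1)‖ ≤ σ ‖v k‖ + (d₁ + d₂)`.
Summing this scalar recursion gives `(1 - σ) ∑ₖ ‖v k‖ ≤ ‖v 0‖ + T (d₁ + d₂)`, and both coordinates
of `v k` are bounded by `‖v k‖`, while `‖v 0‖ ≤ g 0 + h 0`.
-/

open Finset Matrix WithLp

namespace EuclideanSpace

variable {ι : Type*} [Fintype ι]

theorem norm_le_norm_of_nonneg_of_le {x y : EuclideanSpace ℝ ι} (hx : ∀ i, 0 ≤ x i)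
    (hxy : ∀ i, x i ≤ y i) : ‖x‖ ≤ ‖y‖ := by
  rw [EuclideanSpace.norm_eq, EuclideanSpace.norm_eq]
  gcongr with i
  rw [Real.norm_of_nonneg (hx i)]
  exact (hxy i).trans (Real.le_norm_self _)

theorem norm_le_sum_norm {𝕜 : Type*} [RCLike 𝕜] (x : EuclideanSpace 𝕜 ι) :
    ‖x‖ ≤ ∑ i, ‖x i‖ := by
  rw [EuclideanSpace.norm_eq, Real.sqrt_le_left (sum_nonneg fun i _ => norm_nonneg _)]
  exact sum_sq_le_sq_sum_of_nonneg fun i _ => norm_nonneg _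

theorem norm_vecCons_le_add {x y : ℝ} (hx : 0 ≤ x) (hy : 0 ≤ y) : ‖!₂[x, y]‖ ≤ x + y := by
  simpa [Fin.sum_univ_two, abs_of_nonneg hx, abs_of_nonneg hy] using norm_le_sum_norm !₂[x, y]

end EuclideanSpace

theorem Matrix.norm_le_opNorm_mul_add_of_le_mulVec_add {ι : Type*} [Fintype ι] [DecidableEq ι]
    (A : Matrix ι ι ℝ) {x y d : EuclideanSpace ℝ ι} (hy : ∀ i, 0 ≤ y i)
    (hyx : ∀ i, y i ≤ (A *ᵥ ofLp x) i + d i) :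
    ‖y‖ ≤ ‖toEuclideanCLM (𝕜 := ℝ) A‖ * ‖x‖ + ‖d‖ :=
  calc ‖y‖ ≤ ‖toEuclideanCLM (𝕜 := ℝ) A x + d‖ :=
        EuclideanSpace.norm_le_norm_of_nonneg_of_le hy (by simpa using hyx)
    _ ≤ ‖toEuclideanCLM (𝕜 := ℝ) A x‖ + ‖d‖ := norm_add_le _ _
    _ ≤ ‖toEuclideanCLM (𝕜 := ℝ) A‖ * ‖x‖ + ‖d‖ := by grw [ContinuousLinearMap.le_opNorm]

theorem sum_range_le_of_le_mul_add {N : ℕ → ℝ} {σ D : ℝ} (hσ₀ : 0 ≤ σ) (hσ₁ : σ < 1)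
    (hN : ∀ k, 0 ≤ N k) (hstep : ∀ k, N (k + 1) ≤ σ * N k + D) (T : ℕ) :
    ∑ k ∈ range (T + 1), N k ≤ (N 0 + T * D) / (1 - σ) := by
  have hshift : ∑ k ∈ range T, N (k + 1) ≤ σ * ∑ k ∈ range T, N k + T * D :=
    calc ∑ k ∈ range T, N (k + 1) ≤ ∑ k ∈ range T, (σ * N k + D) :=
          sum_le_sum fun k _ => hstep k
      _ = σ * ∑ k ∈ range T, N k + T * D := by
        rw [sum_add_distrib, mul_sum, sum_const, card_range, nsmul_eq_mul]
  rw [le_div_iff₀ (by linarith)]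
  nlinarith [sum_range_succ N T, sum_range_succ' N T, mul_nonneg hσ₀ (hN T)]

theorem stmt_3_general (a₁ b₁ a₂ b₂ d₁ d₂ : ℝ)
    (hd₁ : 0 ≤ d₁) (hd₂ : 0 ≤ d₂)
    (g h : ℕ → ℝ) (hg : ∀ k, 0 ≤ g k) (hh : ∀ k, 0 ≤ h k)
    (hrecg : ∀ k : ℕ, 1 ≤ k → g k ≤ a₁ * g (k - 1) + b₁ * h (k - 1) + d₁)
    (hrech : ∀ k : ℕ, 1 ≤ k → h k ≤ a₂ * g (k - 1) + b₂ * h (k - 1) + d₂)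
    (σ : ℝ)
    (hσ : σ = ‖Matrix.toEuclideanCLM (𝕜 := ℝ) (Matrix.of ![![a₁, b₁], ![a₂, b₂]])‖)
    (hσ1 : σ < 1) (T : ℕ) :
    max (∑ k ∈ Finset.range (T + 1), g k) (∑ k ∈ Finset.range (T + 1), h k)
      ≤ (σ ^ T + 1 / (1 - σ)) * (g 0 + h 0) + T * (d₁ + d₂) / (1 - σ) := by
  have hσ0 : 0 ≤ σ := hσ ▸ norm_nonneg _
  set v : ℕ → EuclideanSpace ℝ (Fin 2) := fun k => !₂[g k, h k]
  have hv : ∀ k i, 0 ≤ v k i := fun k i => by fin_cases i <;> simp [v, hg, hh]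
  have hstep : ∀ k, ‖v (k + 1)‖ ≤ σ * ‖v k‖ + (d₁ + d₂) := fun k =>
    calc ‖v (k + 1)‖ ≤ σ * ‖v k‖ + ‖!₂[d₁, d₂]‖ :=
          hσ ▸ norm_le_opNorm_mul_add_of_le_mulVec_add _ (hv _) fun i => by
            fin_cases i
            · simpa [v, mulVec, dotProduct] using hrecg (k + 1) (Nat.le_add_left 1 k)
            · simpa [v, mulVec, dotProduct] using hrech (k + 1) (Nat.le_add_left 1 k)
      _ ≤ σ * ‖v k‖ + (d₁ + d₂) := by grw [EuclideanSpace.norm_vecCons_le_add hd₁ hd₂]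
  have hsum : ∑ k ∈ range (T + 1), ‖v k‖
      ≤ (σ ^ T + 1 / (1 - σ)) * (g 0 + h 0) + T * (d₁ + d₂) / (1 - σ) :=
    calc ∑ k ∈ range (T + 1), ‖v k‖ ≤ (‖v 0‖ + T * (d₁ + d₂)) / (1 - σ) :=
          sum_range_le_of_le_mul_add hσ0 hσ1 (fun _ => norm_nonneg _) hstep T
      _ ≤ 1 / (1 - σ) * (g 0 + h 0) + T * (d₁ + d₂) / (1 - σ) := by
          rw [add_div, one_div_mul_eq_div]
          grw [EuclideanSpace.norm_vecCons_le_add (hg 0) (hh 0)]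
          linarith
      _ ≤ _ := by
          have := mul_nonneg (pow_nonneg hσ0 T) (add_nonneg (hg 0) (hh 0))
          linarith [add_mul (σ ^ T) (1 / (1 - σ)) (g 0 + h 0)]
  have hcoord : ∀ k i, v k i ≤ ‖v k‖ := fun k i =>
    (Real.le_norm_self _).trans (PiLp.norm_apply_le (v k) i)
  exact max_le ((sum_le_sum fun k _ => hcoord k 0).trans hsum)
    ((sum_le_sum fun k _ => hcoord k 1).trans hsum)

/-- Bound on partial sums of two coupled nonnegative sequences. -/
theorem stmt_3 (a₁ b₁ a₂ b₂ d₁ d₂ : ℝ)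
    (ha₁ : 0 ≤ a₁) (hb₁ : 0 ≤ b₁) (ha₂ : 0 ≤ a₂) (hb₂ : 0 ≤ b₂)
    (hd₁ : 0 ≤ d₁) (hd₂ : 0 ≤ d₂)
    (g h : ℕ → ℝ) (hg : ∀ k, 0 ≤ g k) (hh : ∀ k, 0 ≤ h k)
    (hrecg : ∀ k : ℕ, 1 ≤ k → g k ≤ a₁ * g (k - 1) + b₁ * h (k - 1) + d₁)
    (hrech : ∀ k : ℕ, 1 ≤ k → h k ≤ a₂ * g (k - 1) + b₂ * h (k - 1) + d₂)
    (σ : ℝ)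
    (hσ : σ = ‖Matrix.toEuclideanCLM (𝕜 := ℝ) (Matrix.of ![![a₁, b₁], ![a₂, b₂]])‖)
    (hσ1 : σ < 1) (T : ℕ) :
    max (∑ k ∈ Finset.range (T + 1), g k) (∑ k ∈ Finset.range (T + 1), h k)
      ≤ (σ ^ T + 1 / (1 - σ)) * (g 0 + h 0) + T * (d₁ + d₂) / (1 - σ) :=
  stmt_3_general a₁ b₁ a₂ b₂ d₁ d₂ hd₁ hd₂ g h hg hh hrecg hrech σ hσ hσ1 T
end

section
/- Under the Lyapunov conditions α₁‖x−x_ss(u,d)‖² ≤ V(x,u,d) ≤ α₂‖x−x_ss(u,d)‖² and V(f(x,u,d),u,d) − V(x,u,d) ≤ −α₃‖x−x_ss(u,d)‖², and assuming the output error is bounded via |Φ(u_k,y_{k+1}) − Φ(u_k,h(u_k,d))| ≤ M_y‖y_{k+1} − h(u_k,d)‖ and ‖y_{k+1} − h(u_k,d)‖ ≤ M_g‖x_{k+1} − x_ss(u_k,d)‖, the squared evaluation error satisfies |e_Φ(x_k,u_k)|² ≤ (μ M_y² M_g²)/(2α₂) · V(x_k,u_k,d), where μ = (2α₂/α₁)(1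 − α₃/α₂) and e_Φ(x_k,u_k) = Φ(u_k,y_{k+1}) − Φ(u_k,h(u_k,d)). -/
/-- Bound on the squared objective-evaluation error in terms of the Lyapunov function. -/
theorem stmt_6 {X Y U D : Type*} [NormedAddCommGroup X] [NormedAddCommGroup Y]
    (f : X → U → D → X) (g : X → D → Y) (xss : U → D → X) (V : X → U → D → ℝ)
    (Φ : U → Y → ℝ) (My Mg α₁ α₂ α₃ : ℝ)
    (hMy : 0 ≤ My) (hMg : 0 ≤ Mg)
    (hα₁ : 0 < α₁) (hα₂ : 0 < α₂) (hα₃ : 0 < α₃) (h32 : α₃ ≤ α₂)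
    (hVlow : ∀ x u d, α₁ * ‖x - xss u d‖ ^ 2 ≤ V x u d)
    (hVup : ∀ x u d, V x u d ≤ α₂ * ‖x - xss u d‖ ^ 2)
    (hVdec : ∀ x u d, V (f x u d) u d - V x u d ≤ -α₃ * ‖x - xss u d‖ ^ 2)
    (xk : X) (uk : U) (d : D)
    (hΦ : |Φ uk (g (f xk uk d) d) - Φ uk (g (xss uk d) d)|
            ≤ My * ‖g (f xk uk d) d - g (xss uk d) d‖)
    (hg : ‖g (f xk uk d) d - g (xss uk d) d‖ ≤ Mg * ‖f xk uk d - xss uk d‖) :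
    |Φ uk (g (f xk uk d) d) - Φ uk (g (xss uk d) d)| ^ 2
      ≤ ((2 * α₂ / α₁) * (1 - α₃ / α₂)) * My ^ 2 * Mg ^ 2 / (2 * α₂)
          * V xk uk d := by
  have hlow := hVlow (f xk uk d) uk d
  have hup := hVup xk uk d
  have hdec := hVdec xk uk d
  have hlow2 := hVlow xk uk d
  set e := |Φ uk (g (f xk uk d) d) - Φ uk (g (xss uk d) d)| with he
  have habs : 0 ≤ e := abs_nonneg _
  have hy : 0 ≤ ‖g (f xk uk d) d - g (xss uk d) d‖ := norm_nonneg _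
  have hx : 0 ≤ ‖f xk uk d - xss uk d‖ := norm_nonneg _
  -- e ≤ My * Mg * ‖x₊ - xss‖
  have h1 : e ≤ My * Mg * ‖f xk uk d - xss uk d‖ := by
    calc e ≤ My * ‖g (f xk uk d) d - g (xss uk d) d‖ := hΦ
    _ ≤ My * (Mg * ‖f xk uk d - xss uk d‖) := by
        exact mul_le_mul_of_nonneg_left hg hMy
    _ = My * Mg * ‖f xk uk d - xss uk d‖ := by ring
  have h2 : e ^ 2 ≤ My ^ 2 * Mg ^ 2 * ‖f xk uk d - xss uk d‖ ^ 2 := by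
    nlinarith [mul_nonneg (mul_nonneg hMy hMg) hx]
  -- key: α₁ * ‖x₊ - xss‖² ≤ (1 - α₃/α₂) * V xk
  have hVx : 0 ≤ V xk uk d := le_trans (by positivity) hlow2
  have hkey : α₁ * ‖f xk uk d - xss uk d‖ ^ 2 ≤ (1 - α₃ / α₂) * V xk uk d := by
    have hVf : V (f xk uk d) uk d ≤ (1 - α₃ / α₂) * V xk uk d := by
      have : α₃ * ‖xk - xss uk d‖ ^ 2 ≥ α₃ / α₂ * V xk uk d := by
        rw [ge_iff_le, div_mul_eq_mul_div, div_le_iff₀ hα₂]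
        nlinarith
      linarith
    linarith
  have hrhs : ((2 * α₂ / α₁) * (1 - α₃ / α₂)) * My ^ 2 * Mg ^ 2 / (2 * α₂)
      * V xk uk d = My ^ 2 * Mg ^ 2 * ((1 - α₃ / α₂) * V xk uk d / α₁) := by
    field_simp
  rw [hrhs]
  calc e ^ 2 ≤ My ^ 2 * Mg ^ 2 * ‖f xk uk d - xss uk d‖ ^ 2 := h2
  _ ≤ My ^ 2 * Mg ^ 2 * ((1 - α₃ / α₂) * V xk uk d / α₁) := by
      apply mul_le_mul_of_nonneg_left _ (by positivity)
      rw [le_div_iff₀ hα₁]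
      linarith
end

section
/- Let V satisfy α₁‖x−x_ss(u,d)‖² ≤ V(x,u,d) ≤ α₂‖x−x_ss(u,d)‖², let x_ss(·,d) be M_x-Lipschitz, and let the Lyapunov decrease give ‖x_k − x_ss(u_{k−1},d)‖² ≤ (1/α₁)(1−α₃/α₂)V(x_{k−1},u_{k−1},d). Then V(x_k,u_k,d) ≤ μ V(x_{k−1},u_{k−1},d) + 2α₂ M_x² ‖u_k − u_{k−1}‖², where μ = (2α₂/α₁)(1−α₃/α₂). -/
/-- One-step recursive bound on the Lyapunov function along input changes. -/
theorem stmt_7 {X U D : Type*} [NormedAddCommGroup X] [NormedAddCommGroup U]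
    (xss : U → D → X) (V : X → U → D → ℝ)
    (α₁ α₂ α₃ Mx : ℝ) (hα₁ : 0 < α₁) (hα₂ : 0 < α₂) (hα₃ : 0 < α₃)
    (h32 : α₃ ≤ α₂) (hMx : 0 ≤ Mx)
    (hVlow : ∀ x u d, α₁ * ‖x - xss u d‖ ^ 2 ≤ V x u d)
    (hVup : ∀ x u d, V x u d ≤ α₂ * ‖x - xss u d‖ ^ 2)
    (hxss : ∀ (u u' : U) (d : D), ‖xss u d - xss u' d‖ ≤ Mx * ‖u - u'‖)
    (xk xkm : X) (uk ukm : U) (d : D)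
    (hdec : ‖xk - xss ukm d‖ ^ 2 ≤ (1 / α₁) * (1 - α₃ / α₂) * V xkm ukm d) :
    V xk uk d ≤ ((2 * α₂ / α₁) * (1 - α₃ / α₂)) * V xkm ukm d
        + 2 * α₂ * Mx ^ 2 * ‖uk - ukm‖ ^ 2 := by
  have htri : ‖xk - xss uk d‖ ≤ ‖xk - xss ukm d‖ + ‖xss ukm d - xss uk d‖ := by
    have := norm_sub_le_norm_sub_add_norm_sub xk (xss ukm d) (xss uk d)
    linarith
  have h1 : ‖xk - xss uk d‖ ^ 2 ≤
      2 * ‖xk - xss ukm d‖ ^ 2 + 2 * ‖xss ukm d - xss uk d‖ ^ 2 := by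
    have h0 : (0:ℝ) ≤ ‖xk - xss uk d‖ := norm_nonneg _
    nlinarith [sq_nonneg (‖xk - xss ukm d‖ - ‖xss ukm d - xss uk d‖),
      sq_abs (‖xk - xss uk d‖), abs_nonneg (‖xk - xss uk d‖),
      sq_nonneg ‖xk - xss ukm d‖]
  have h2 : ‖xss ukm d - xss uk d‖ ^ 2 ≤ Mx ^ 2 * ‖ukm - uk‖ ^ 2 := by
    have h := hxss ukm uk d
    nlinarith [norm_nonneg (xss ukm d - xss uk d), norm_nonneg (ukm - uk)]
  have hnorm : ‖ukm - uk‖ = ‖uk - ukm‖ := norm_sub_rev _ _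
  have hup := hVup xk uk d
  calc V xk uk d ≤ α₂ * ‖xk - xss uk d‖ ^ 2 := hup
    _ ≤ α₂ * (2 * ‖xk - xss ukm d‖ ^ 2 + 2 * ‖xss ukm d - xss uk d‖ ^ 2) := by
        exact mul_le_mul_of_nonneg_left h1 hα₂.le
    _ ≤ α₂ * (2 * ((1 / α₁) * (1 - α₃ / α₂) * V xkm ukm d) + 2 * (Mx ^ 2 * ‖uk - ukm‖ ^ 2)) := by
        rw [hnorm] at h2; nlinarith
    _ = ((2 * α₂ / α₁) * (1 - α₃ / α₂)) * V xkm ukm d + 2 * α₂ * Mx ^ 2 * ‖uk - ukm‖ ^ 2 := by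
        field_simp
end
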